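/- arXiv:2507.09746 — 4 statements merged into one kernel-verified Lean document; each statement's English description precedes it below -/
import Mathlib

section
/- For every g ≥ 0, the coefficient of z^(g+1) in the polynomial (1 - x*y*z^2)*(1 - x*z)^g*(1 - y*z)^g, viewed as a polynomial in z with coefficients in ℤ[x,y], is the zero polynomial. -/
open Polynomial Finset

lemma aux {R : Type*} [CommRing R] (a : R) (g i : ℕ) :
    ((1 - C a * X) ^ g : R[X]).coeff i = (-a) ^ i * g.choose i := by
  have h : (1 - C a * X : R[X]) = C (-a) * X + 1 := by
    rw [C_neg]; ring
  rw [h, add_pow]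
  simp only [one_pow, mul_one, mul_pow, ← C_pow, ← C_eq_natCast, finset_sum_coeff,
    coeff_mul_C, coeff_C_mul, coeff_X_pow]
  rw [Finset.sum_congr rfl (fun k _ => by rw [mul_ite, mul_one, mul_zero, ite_mul, zero_mul])]
  rw [Finset.sum_ite_eq (range (g+1)) i]
  split
  · rfl
  · rename_i h'
    rw [Nat.choose_eq_zero_of_lt (by simpa using h'), Nat.cast_zero, mul_zero]

lemma key {R : Type*} [CommRing R] (x y : R) (g : ℕ) :
    ((1 - C (x * y) * X ^ 2) * (1 - C x * X) ^ g * (1 - C y * X) ^ g : R[X]).coeff (g + 1)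
      = 0 := by
  have hre : ((1 - C (x * y) * X ^ 2) * (1 - C x * X) ^ g * (1 - C y * X) ^ g : R[X])
      = ((1 - C x * X) ^ g * (1 - C y * X) ^ g)
        - C (x * y) * (((1 - C x * X) ^ g * (1 - C y * X) ^ g) * X ^ 2) := by ring
  rw [hre, coeff_sub, coeff_C_mul, coeff_mul_X_pow']
  cases g with
  | zero => simp [coeff_one]
  | succ n =>
      rw [if_pos (by omega)]
      have hnn : n + 1 + 1 - 2 = n := by omega
      rw [hnn, coeff_mul, coeff_mul]
      simp only [aux]
      rw [Finset.Nat.sum_antidiagonal_eq_sum_range_succ_mk,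
        Finset.Nat.sum_antidiagonal_eq_sum_range_succ_mk]
      dsimp only
      simp only [Nat.succ_eq_add_one]
      rw [show n + 1 + 1 + 1 = n + 2 + 1 by omega, Finset.sum_range_succ,
        Finset.sum_range_succ']
      rw [Nat.choose_succ_self, show n + 1 + 1 - (n + 2) = 0 by omega,
        show n + 1 + 1 - 0 = n + 2 by omega, Nat.choose_succ_self]
      push_cast
      rw [Finset.mul_sum]
      rw [Finset.sum_congr rfl (fun i hi => ?_)]
      · ring
      · have hi' : i ≤ n := by simpa using Nat.lt_succ_iff.mp (Finset.mem_range.mp hi)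
        have e1 : n + 1 - i = (n - i) + 1 := by omega
        have e2 : (n + 1).choose ((n - i) + 1) = (n + 1).choose i := by
          rw [← Nat.choose_symm (show i ≤ n + 1 by omega)]; congr 1; omega
        have e3 : (n + 1).choose (n - i) = (n + 1).choose (i + 1) := by
          rw [← Nat.choose_symm (show i + 1 ≤ n + 1 by omega)]; congr 1; omega
        rw [e1, e2, e3, pow_succ, pow_succ]
        ring

theorem stmt2 (g : ℕ) :
    (((1 - Polynomial.C (MvPolynomial.X 0 * MvPolynomial.X 1) * X ^ 2) *
      (1 - Polynomial.C (MvPolynomial.X 0) * X) ^ g *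
      (1 - Polynomial.C (MvPolynomial.X 1) * X) ^ g :
        Polynomial (MvPolynomial (Fin 2) ℤ))).coeff (g + 1) = 0 :=
  key _ _ g
end

section
/- Let g ≥ 0, let P(x,y) = Σ_{σ+τ ≥ g-1} x^σ y^τ (C(g,σ)C(g,τ) - C(g,σ+1)C(g,τ+1)) and Q(x,y) = Σ_{σ+τ ≤ g} x^σ y^τ (C(g,σ)C(g,τ) - C(g,σ-1)C(g,τ-1)). Let Φ_g be the ℤ[x,y]-linear map on polynomials in z defined by Φ_g(z^j) = u^j t^j for 0 ≤ j ≤ g, Φ_g(z^{g+1}) = 0, and Φ_g(z^j) = u^{j-1} t^j for g+2 ≤ j ≤ 2g+2. Then -x*y*u*t^2 * P(-x*u*t, -y*u*t) + Q(-x*u*t, -y*u*t) = Φ_g{(1 - x*y*z^2)*(1 - x*z)^g*(1 - y*z)^g}. -/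
open MvPolynomial Polynomial

noncomputable section

/-- The ring `ℤ[x, y, u, t]`, with `x = X 0`, `y = X 1`, `u = X 2`, `t = X 3`. -/
abbrev R4 := MvPolynomial (Fin 4) ℤ

/-- Binomial coefficient `C(g,k)` as an integer. -/
def Cg (g k : ℕ) : ℤ := (g.choose k : ℤ)

/-- `C(g,k-1)` with the convention that it is `0` for `k = 0`. -/
def CgSub1 (g k : ℕ) : ℤ := if k = 0 then 0 else (g.choose (k - 1) : ℤ)

/-- `P(a,b) = Σ_{σ,τ ≥ 0, σ+τ ≥ g-1} a^σ b^τ (C(g,σ)C(g,τ) − C(g,σ+1)C(g,τ+1))`,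
evaluated at ring elements `a`, `b` (the sum is finite since terms with
`σ > g` or `τ > g` vanish). -/
def Pval (g : ℕ) (a b : R4) : R4 :=
  ∑ σ ∈ Finset.range (g + 2), ∑ τ ∈ Finset.range (g + 2),
    if g - 1 ≤ σ + τ then
      MvPolynomial.C (Cg g σ * Cg g τ - Cg g (σ + 1) * Cg g (τ + 1)) * a ^ σ * b ^ τ
    else 0

/-- `Q(a,b) = Σ_{σ,τ ≥ 0, σ+τ ≤ g} a^σ b^τ (C(g,σ)C(g,τ) − C(g,σ−1)C(g,τ−1))`. -/
def Qval (g : ℕ) (a b : R4) : R4 :=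
  ∑ σ ∈ Finset.range (g + 1), ∑ τ ∈ Finset.range (g + 1),
    if σ + τ ≤ g then
      MvPolynomial.C (Cg g σ * Cg g τ - CgSub1 g σ * CgSub1 g τ) * a ^ σ * b ^ τ
    else 0

/-- `(1 - xyz²)(1 - xz)^g (1 - yz)^g` as a polynomial in `z` over `ℤ[x,y,u,t]`. -/
def Wpoly (g : ℕ) : Polynomial R4 :=
  (1 - Polynomial.C (X 0 * X 1) * Polynomial.X ^ 2) *
    (1 - Polynomial.C (X 0) * Polynomial.X) ^ g *
    (1 - Polynomial.C (X 1) * Polynomial.X) ^ g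

/-- `Φ_g` applied to `(1 - xyz²)(1 - xz)^g (1 - yz)^g`: the `z^j` coefficient is
multiplied by `u^j t^j` for `0 ≤ j ≤ g`, by `0` for `j = g+1`, and by `u^{j-1} t^j`
for `g+2 ≤ j ≤ 2g+2`. -/
def PhiW (g : ℕ) : R4 :=
  ∑ j ∈ Finset.range (2 * g + 3),
    (if j ≤ g then X 2 ^ j * X 3 ^ j
     else if j = g + 1 then 0
     else X 2 ^ (j - 1) * X 3 ^ j) * (Wpoly g).coeff j

/-! ### Auxiliary definitions -/

/-- The coefficient `C(g,σ)C(g,τ) − C(g,σ−1)C(g,τ−1)`. -/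
def Dg (g σ τ : ℕ) : ℤ := Cg g σ * Cg g τ - CgSub1 g σ * CgSub1 g τ

/-- The monomial contribution `(-1)^{σ+τ} D_g(σ,τ) x^σ y^τ`. -/
def ee (g σ τ : ℕ) : R4 :=
  MvPolynomial.C ((-1) ^ (σ + τ) * Dg g σ τ) * X 0 ^ σ * X 1 ^ τ

/-- The `Φ_g` multiplier. -/
def mm (g j : ℕ) : R4 :=
  if j ≤ g then X 2 ^ j * X 3 ^ j
  else if j = g + 1 then 0
  else X 2 ^ (j - 1) * X 3 ^ j

/-! ### Arithmetic lemmas about `Dg` -/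

lemma Cg_zero {g k : ℕ} (h : g < k) : Cg g k = 0 := by
  simp [Cg, Nat.choose_eq_zero_of_lt h]

lemma CgSub1_succ (g k : ℕ) : CgSub1 g (k + 1) = Cg g k := by
  simp [CgSub1, Cg]

lemma CgSub1_zero (g : ℕ) : CgSub1 g 0 = 0 := by simp [CgSub1]

lemma Dg_large_left {g σ : ℕ} (τ : ℕ) (h : g + 2 ≤ σ) : Dg g σ τ = 0 := by
  have h1 : Cg g σ = 0 := Cg_zero (by omega)
  have h2 : CgSub1 g σ = 0 := by
    rw [CgSub1, if_neg (by omega : ¬ σ = 0)]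
    simp [Nat.choose_eq_zero_of_lt (by omega : g < σ - 1)]
  simp [Dg, h1, h2]

lemma Dg_large_right {g τ : ℕ} (σ : ℕ) (h : g + 2 ≤ τ) : Dg g σ τ = 0 := by
  have h1 : Cg g τ = 0 := Cg_zero (by omega)
  have h2 : CgSub1 g τ = 0 := by
    rw [CgSub1, if_neg (by omega : ¬ τ = 0)]
    simp [Nat.choose_eq_zero_of_lt (by omega : g < τ - 1)]
  simp [Dg, h1, h2]

lemma Dg_zero_left {g τ : ℕ} (h : g + 1 ≤ τ) : Dg g 0 τ = 0 := by
  simp [Dg, CgSub1_zero, Cg_zero (show g < τ by omega)]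

lemma Dg_zero_right {g σ : ℕ} (h : g + 1 ≤ σ) : Dg g σ 0 = 0 := by
  simp [Dg, CgSub1_zero, Cg_zero (show g < σ by omega)]

lemma Dg_diag {g σ τ : ℕ} (h : σ + τ = g + 1) : Dg g σ τ = 0 := by
  rcases Nat.eq_zero_or_pos σ with hσ | hσ
  · exact hσ ▸ Dg_zero_left (by omega)
  rcases Nat.eq_zero_or_pos τ with hτ | hτ
  · exact hτ ▸ Dg_zero_right (by omega)
  have hσg : σ ≤ g := by omega
  have h1 : τ = g - (σ - 1) := by omega
  have h2 : τ - 1 = g - σ := by omega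
  have e1 : g.choose τ = g.choose (σ - 1) := by
    rw [h1, Nat.choose_symm (by omega)]
  have e2 : g.choose (τ - 1) = g.choose σ := by
    rw [h2, Nat.choose_symm hσg]
  rw [Dg, CgSub1, CgSub1, if_neg (by omega : ¬ σ = 0), if_neg (by omega : ¬ τ = 0)]
  rw [Cg, Cg, e1, e2]
  push_cast
  ring

/-! ### Vanishing of `ee` -/

lemma ee_large_left {g σ : ℕ} (τ : ℕ) (h : g + 2 ≤ σ) : ee g σ τ = 0 := by
  simp [ee, Dg_large_left τ h]

lemma ee_large_right {g τ : ℕ} (σ : ℕ) (h : g + 2 ≤ τ) : ee g σ τ = 0 := by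
  simp [ee, Dg_large_right σ h]

lemma ee_zero_left {g τ : ℕ} (h : g + 1 ≤ τ) : ee g 0 τ = 0 := by
  simp [ee, Dg_zero_left h]

lemma ee_zero_right {g σ : ℕ} (h : g + 1 ≤ σ) : ee g σ 0 = 0 := by
  simp [ee, Dg_zero_right h]

lemma ee_diag {g σ τ : ℕ} (h : σ + τ = g + 1) : ee g σ τ = 0 := by
  simp [ee, Dg_diag h]

/-! ### Triangle reindexing -/

lemma tri {M : Type*} [AddCommMonoid M] (n : ℕ) (f : ℕ → ℕ → M) :
    ∑ j ∈ Finset.range n, ∑ σ ∈ Finset.range (j + 1), f σ (j - σ)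
      = ∑ σ ∈ Finset.range n, ∑ τ ∈ Finset.range n,
          if σ + τ < n then f σ τ else 0 := by
  have h1 : ∀ σ ∈ Finset.range n,
      (∑ τ ∈ Finset.range n, if σ + τ < n then f σ τ else 0)
        = ∑ τ ∈ Finset.range (n - σ), f σ τ := by
    intro σ hσ
    rw [Finset.mem_range] at hσ
    rw [← Finset.sum_filter]
    congr 1
    ext τ
    simp only [Finset.mem_filter, Finset.mem_range]
    omega
  rw [Finset.sum_congr rfl h1, Finset.sum_sigma', Finset.sum_sigma']
  apply Finset.sum_nbij' (fun p => (⟨p.2, p.1 - p.2⟩ : (_ : ℕ) × ℕ))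
    (fun p => (⟨p.1 + p.2, p.1⟩ : (_ : ℕ) × ℕ))
  · intro a ha
    simp only [Finset.mem_sigma, Finset.mem_range] at ha ⊢
    omega
  · intro a ha
    simp only [Finset.mem_sigma, Finset.mem_range] at ha ⊢
    omega
  · intro a ha
    simp only [Finset.mem_sigma, Finset.mem_range] at ha
    ext <;> simp <;> omega
  · intro a ha
    simp only [Finset.mem_sigma, Finset.mem_range] at ha
    ext <;> simp
  · intro a ha
    simp only [Finset.mem_sigma, Finset.mem_range] at ha
    simp

lemma sum_shift {M : Type*} [AddCommMonoid M] (n : ℕ) (f : ℕ → M)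
    (h0 : f 0 = 0) (hl : f (n + 1) = 0) :
    ∑ i ∈ Finset.range (n + 2), f i = ∑ i ∈ Finset.range n, f (i + 1) :=
  calc ∑ i ∈ Finset.range (n + 2), f i
      = (∑ i ∈ Finset.range (n + 1), f (i + 1)) + f 0 := Finset.sum_range_succ' f (n + 1)
    _ = ((∑ i ∈ Finset.range n, f (i + 1)) + f (n + 1)) + f 0 := by
        rw [Finset.sum_range_succ]
    _ = ∑ i ∈ Finset.range n, f (i + 1) := by rw [h0, hl, add_zero, add_zero]

/-! ### Coefficients of `Wpoly` -/

lemma Bc (g j : ℕ) (a : R4) :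
    ((1 - Polynomial.C a * Polynomial.X) ^ g).coeff j
      = MvPolynomial.C ((-1) ^ j * Cg g j) * a ^ j := by
  have key : ((1 - Polynomial.C a * Polynomial.X) ^ g).coeff j
      = (-1) ^ j * (g.choose j : R4) * a ^ j := by
    have h : (1 - Polynomial.C a * Polynomial.X : Polynomial R4)
        = Polynomial.C (-a) * Polynomial.X + 1 := by
      ring_nf; simp [map_neg]; ring
    rw [h, add_pow]
    rw [Polynomial.finset_sum_coeff]
    have h2 : ∀ k ∈ Finset.range (g + 1),
        ((Polynomial.C (-a) * Polynomial.X) ^ k * 1 ^ (g - k)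
            * (g.choose k : Polynomial R4)).coeff j
          = if j = k then (-1) ^ k * (g.choose k : R4) * a ^ k else 0 := by
      intro k _
      rw [one_pow, mul_one, mul_pow, ← Polynomial.C_pow, ← Polynomial.C_eq_natCast,
        mul_assoc, mul_comm (Polynomial.X ^ k), ← mul_assoc, ← Polynomial.C_mul,
        Polynomial.coeff_C_mul, Polynomial.coeff_X_pow]
      by_cases hk : j = k <;> simp [hk]; ring
    rw [Finset.sum_congr rfl h2, Finset.sum_ite_eq]
    by_cases hj : j ∈ Finset.range (g + 1)
    · simp [hj]
    · simp only [Finset.mem_range] at hj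
      rw [if_neg (by simpa using hj)]
      rw [Nat.choose_eq_zero_of_lt (by omega)]
      simp
  rw [key, Cg, map_mul, map_pow, map_neg, map_one, map_natCast]

lemma ABc (g j : ℕ) :
    (((1 - Polynomial.C (X 0 : R4) * Polynomial.X) ^ g
        * (1 - Polynomial.C (X 1 : R4) * Polynomial.X) ^ g).coeff j)
      = ∑ σ ∈ Finset.range (j + 1),
          MvPolynomial.C ((-1) ^ j * (Cg g σ * Cg g (j - σ)))
            * X 0 ^ σ * X 1 ^ (j - σ) := by
  rw [Polynomial.coeff_mul, Finset.Nat.sum_antidiagonal_eq_sum_range_succ_mk]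
  refine Finset.sum_congr rfl fun σ hσ => ?_
  rw [Finset.mem_range] at hσ
  rw [Bc, Bc]
  have h : σ + (j - σ) = j := by omega
  have hpow : ((-1 : ℤ) ^ σ) * ((-1 : ℤ) ^ (j - σ)) = (-1) ^ j := by
    rw [← pow_add, h]
  rw [← hpow]
  push_cast [map_mul, map_pow, map_neg, map_one]
  ring

lemma coeffW (g j : ℕ) :
    (Wpoly g).coeff j = ∑ σ ∈ Finset.range (j + 1), ee g σ (j - σ) := by
  set AB := (1 - Polynomial.C (X 0 : R4) * Polynomial.X) ^ g
      * (1 - Polynomial.C (X 1 : R4) * Polynomial.X) ^ g with hAB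
  have hW : Wpoly g = AB - Polynomial.C (X 0 * X 1) * (AB * Polynomial.X ^ 2) := by
    rw [Wpoly, hAB]; ring
  have hsplit : ∀ σ ∈ Finset.range (j + 1), ee g σ (j - σ)
      = MvPolynomial.C ((-1) ^ j * (Cg g σ * Cg g (j - σ))) * X 0 ^ σ * X 1 ^ (j - σ)
        - MvPolynomial.C ((-1) ^ j * (CgSub1 g σ * CgSub1 g (j - σ)))
            * X 0 ^ σ * X 1 ^ (j - σ) := by
    intro σ hσ
    rw [Finset.mem_range] at hσ
    have h : σ + (j - σ) = j := by omega
    rw [ee, Dg, h, mul_sub, map_sub]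
    ring
  rw [Finset.sum_congr rfl hsplit, Finset.sum_sub_distrib, ← ABc]
  rw [hW, Polynomial.coeff_sub, Polynomial.coeff_C_mul, Polynomial.coeff_mul_X_pow']
  congr 1
  -- remains: X 0 * X 1 * (if 2 ≤ j then AB.coeff (j-2) else 0) = second sum
  by_cases hj2 : 2 ≤ j
  case neg =>
    have hj01 : j = 0 ∨ j = 1 := by omega
    rcases hj01 with h | h
    · subst h; simp [CgSub1_zero]
    · subst h; simp [Finset.sum_range_succ, CgSub1_zero]
  case pos =>
    obtain ⟨d, rfl⟩ : ∃ d, j = d + 2 := ⟨j - 2, by omega⟩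
    rw [if_pos (by omega)]
    have hd : d + 2 - 2 = d := by omega
    rw [hd, ABc]
    have key : (∑ σ ∈ Finset.range (d + 2 + 1),
        MvPolynomial.C ((-1) ^ (d + 2) * (CgSub1 g σ * CgSub1 g (d + 2 - σ)))
          * (X 0 : R4) ^ σ * X 1 ^ (d + 2 - σ))
        = ∑ i ∈ Finset.range (d + 1),
            MvPolynomial.C ((-1) ^ (d + 2) * (CgSub1 g (i + 1) * CgSub1 g (d + 2 - (i + 1))))
              * X 0 ^ (i + 1) * X 1 ^ (d + 2 - (i + 1)) := by
      refine sum_shift (d + 1) _ (by simp [CgSub1_zero]) ?_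
      have h2 : d + 2 - (d + 1 + 1) = 0 := by omega
      simp [h2, CgSub1_zero]
    rw [key, Finset.mul_sum]
    refine (Finset.sum_congr rfl fun i hi => ?_).symm
    rw [Finset.mem_range] at hi
    have h1 : d + 2 - (i + 1) = (d - i) + 1 := by omega
    rw [h1, CgSub1_succ, CgSub1_succ]
    have h2 : (-1 : ℤ) ^ (d + 2) = (-1) ^ d := by ring
    rw [h2]
    ring

/-! ### `PhiW` as a square double sum -/

lemma PhiW_eq (g : ℕ) :
    PhiW g = ∑ σ ∈ Finset.range (g + 2), ∑ τ ∈ Finset.range (g + 2),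
      mm g (σ + τ) * ee g σ τ := by
  have step1 : PhiW g = ∑ j ∈ Finset.range (2 * g + 3),
      ∑ σ ∈ Finset.range (j + 1), mm g (σ + (j - σ)) * ee g σ (j - σ) := by
    rw [PhiW]
    refine Finset.sum_congr rfl fun j hj => ?_
    rw [coeffW, Finset.mul_sum]
    refine Finset.sum_congr rfl fun σ hσ => ?_
    rw [Finset.mem_range] at hσ
    have h : σ + (j - σ) = j := by omega
    rw [h, mm]
  have t := tri (2 * g + 3) (fun σ τ => mm g (σ + τ) * ee g σ τ)
  rw [step1, t]
  have shrink_inner : ∀ σ : ℕ,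
      (∑ τ ∈ Finset.range (2 * g + 3),
        if σ + τ < 2 * g + 3 then mm g (σ + τ) * ee g σ τ else 0)
      = ∑ τ ∈ Finset.range (g + 2),
        if σ + τ < 2 * g + 3 then mm g (σ + τ) * ee g σ τ else 0 := by
    intro σ
    refine (Finset.sum_subset (Finset.range_subset_range.2 (by omega)) fun τ _ hτ => ?_).symm
    rw [Finset.mem_range, not_lt] at hτ
    rw [ee_large_right σ (by omega), mul_zero, ite_self]
  have shrink_outer :
      (∑ σ ∈ Finset.range (2 * g + 3), ∑ τ ∈ Finset.range (g + 2),
        if σ + τ < 2 * g + 3 then mm g (σ + τ) * ee g σ τ else 0)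
      = ∑ σ ∈ Finset.range (g + 2), ∑ τ ∈ Finset.range (g + 2),
        if σ + τ < 2 * g + 3 then mm g (σ + τ) * ee g σ τ else 0 := by
    refine (Finset.sum_subset (Finset.range_subset_range.2 (by omega)) fun σ _ hσ => ?_).symm
    rw [Finset.mem_range, not_lt] at hσ
    refine Finset.sum_eq_zero fun τ _ => ?_
    rw [ee_large_left τ (by omega), mul_zero, ite_self]
  simp only [shrink_inner]
  rw [shrink_outer]
  refine Finset.sum_congr rfl fun σ hσ => Finset.sum_congr rfl fun τ hτ => ?_
  rw [Finset.mem_range] at hσ hτ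
  rw [if_pos (by omega)]

/-! ### The `Q` part -/

lemma Qpart (g : ℕ) :
    Qval g (-(X 0 * X 2 * X 3)) (-(X 1 * X 2 * X 3))
      = ∑ σ ∈ Finset.range (g + 2), ∑ τ ∈ Finset.range (g + 2),
          if σ + τ ≤ g then mm g (σ + τ) * ee g σ τ else 0 := by
  have qe : ∀ σ τ : ℕ,
      (if σ + τ ≤ g then
        MvPolynomial.C (Cg g σ * Cg g τ - CgSub1 g σ * CgSub1 g τ)
          * (-(X 0 * X 2 * X 3)) ^ σ * (-(X 1 * X 2 * X 3)) ^ τ else 0)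
      = (if σ + τ ≤ g then mm g (σ + τ) * ee g σ τ else 0) := by
    intro σ τ
    by_cases h : σ + τ ≤ g
    · rw [if_pos h, if_pos h, mm, if_pos h, ee, Dg]
      have hx : (-(X 0 * X 2 * X 3) : R4) ^ σ
          = (-1) ^ σ * X 0 ^ σ * X 2 ^ σ * X 3 ^ σ := by rw [neg_pow]; ring
      have hy : (-(X 1 * X 2 * X 3) : R4) ^ τ
          = (-1) ^ τ * X 1 ^ τ * X 2 ^ τ * X 3 ^ τ := by rw [neg_pow]; ring
      rw [hx, hy, map_mul, map_pow, map_neg, map_one]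
      simp only [pow_add]
      ring
    · rw [if_neg h, if_neg h]
  rw [Qval]
  simp only [qe]
  have ei : ∀ σ : ℕ,
      (∑ τ ∈ Finset.range (g + 1), if σ + τ ≤ g then mm g (σ + τ) * ee g σ τ else 0)
      = ∑ τ ∈ Finset.range (g + 2), if σ + τ ≤ g then mm g (σ + τ) * ee g σ τ else 0 := by
    intro σ
    refine Finset.sum_subset (Finset.range_subset_range.2 (by omega)) fun τ _ hτ => ?_
    rw [Finset.mem_range, not_lt] at hτ
    rw [if_neg (by omega)]
  simp only [ei]
  refine Finset.sum_subset (Finset.range_subset_range.2 (by omega)) fun σ _ hσ => ?_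
  rw [Finset.mem_range, not_lt] at hσ
  exact Finset.sum_eq_zero fun τ _ => by rw [if_neg (by omega)]

/-! ### The `P` part -/

lemma Ppart (g : ℕ) :
    - (X 0 * X 1 * X 2 * X 3 ^ 2) *
        Pval g (-(X 0 * X 2 * X 3)) (-(X 1 * X 2 * X 3))
      = ∑ σ ∈ Finset.range (g + 2), ∑ τ ∈ Finset.range (g + 2),
          if g + 1 ≤ σ + τ then mm g (σ + τ) * ee g σ τ else 0 := by
  -- F j multiplier for the P side
  set F : ℕ → ℕ → R4 := fun σ τ =>
    if g + 1 ≤ σ + τ then X 2 ^ (σ + τ - 1) * X 3 ^ (σ + τ) * ee g σ τ else 0 with hF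
  have hF0r : ∀ σ : ℕ, F σ 0 = 0 := by
    intro σ
    simp only [hF]
    by_cases h : g + 1 ≤ σ + 0
    · rw [if_pos h, ee_zero_right (by omega), mul_zero]
    · rw [if_neg h]
  have hF0l : ∀ τ : ℕ, F 0 τ = 0 := by
    intro τ
    simp only [hF]
    by_cases h : g + 1 ≤ 0 + τ
    · rw [if_pos h, ee_zero_left (by omega), mul_zero]
    · rw [if_neg h]
  have hFbig_r : ∀ σ : ℕ, F σ (g + 2) = 0 := by
    intro σ
    simp only [hF]
    by_cases h : g + 1 ≤ σ + (g + 2)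
    · rw [if_pos h, ee_large_right σ (by omega), mul_zero]
    · rw [if_neg h]
  have hFbig_l : ∀ τ : ℕ, F (g + 2) τ = 0 := by
    intro τ
    simp only [hF]
    by_cases h : g + 1 ≤ g + 2 + τ
    · rw [if_pos h, ee_large_left τ (by omega), mul_zero]
    · rw [if_neg h]
  -- Step 1: the P side equals the double sum of F (σ+1) (τ+1)
  have step1 : - (X 0 * X 1 * X 2 * X 3 ^ 2) *
      Pval g (-(X 0 * X 2 * X 3)) (-(X 1 * X 2 * X 3))
      = ∑ σ ∈ Finset.range (g + 2), ∑ τ ∈ Finset.range (g + 2), F (σ + 1) (τ + 1) := by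
    rw [Pval, Finset.mul_sum]
    refine Finset.sum_congr rfl fun σ _ => ?_
    rw [Finset.mul_sum]
    refine Finset.sum_congr rfl fun τ _ => ?_
    simp only [hF]
    by_cases h : g - 1 ≤ σ + τ
    · rw [if_pos h, if_pos (by omega : g + 1 ≤ (σ + 1) + (τ + 1))]
      rw [ee, Dg, CgSub1_succ, CgSub1_succ]
      have hst : σ + 1 + (τ + 1) = σ + τ + 2 := by omega
      have hst1 : σ + 1 + (τ + 1) - 1 = σ + τ + 1 := by omega
      rw [hst1, hst]
      have hx : (-(X 0 * X 2 * X 3) : R4) ^ σ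
          = (-1) ^ σ * X 0 ^ σ * X 2 ^ σ * X 3 ^ σ := by rw [neg_pow]; ring
      have hy : (-(X 1 * X 2 * X 3) : R4) ^ τ
          = (-1) ^ τ * X 1 ^ τ * X 2 ^ τ * X 3 ^ τ := by rw [neg_pow]; ring
      rw [hx, hy]
      have hC : (MvPolynomial.C ((-1) ^ (σ + τ + 2)
          * (Cg g (σ + 1) * Cg g (τ + 1) - Cg g σ * Cg g τ)) : R4)
          = (-1) ^ (σ + τ + 2)
            * MvPolynomial.C (Cg g (σ + 1) * Cg g (τ + 1) - Cg g σ * Cg g τ) := by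
        rw [map_mul]; simp
      have hC2 : (MvPolynomial.C (Cg g σ * Cg g τ - Cg g (σ + 1) * Cg g (τ + 1)) : R4)
          = - MvPolynomial.C (Cg g (σ + 1) * Cg g (τ + 1) - Cg g σ * Cg g τ) := by
        rw [← map_neg]; congr 1; ring
      rw [hC, hC2]
      have e2 : (X 2 : R4) ^ (σ + τ + 1) = X 2 ^ σ * X 2 ^ τ * X 2 := by
        rw [← pow_add, ← pow_succ]
      have e3 : (X 3 : R4) ^ (σ + τ + 2) = X 3 ^ σ * X 3 ^ τ * X 3 ^ 2 := by
        rw [← pow_add, ← pow_add]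
      have e4 : ((-1 : R4)) ^ (σ + τ + 2) = (-1) ^ σ * (-1) ^ τ := by
        rw [pow_add, pow_add]; ring
      rw [e2, e3, e4]
      ring
    · rw [if_neg h, if_neg (by omega : ¬ g + 1 ≤ (σ + 1) + (τ + 1)), mul_zero]
  rw [step1]
  -- Step 2: reindex both sums
  have reindex_inner : ∀ σ' : ℕ,
      (∑ τ ∈ Finset.range (g + 2), F σ' (τ + 1)) = ∑ τ ∈ Finset.range (g + 2), F σ' τ := by
    intro σ'
    have h1 : (∑ τ ∈ Finset.range (g + 3), F σ' τ)
        = (∑ τ ∈ Finset.range (g + 2), F σ' (τ + 1)) + F σ' 0 :=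
      Finset.sum_range_succ' (F σ') (g + 2)
    have h2 : (∑ τ ∈ Finset.range (g + 3), F σ' τ)
        = (∑ τ ∈ Finset.range (g + 2), F σ' τ) + F σ' (g + 2) :=
      Finset.sum_range_succ (F σ') (g + 2)
    rw [hF0r, add_zero] at h1
    rw [hFbig_r, add_zero] at h2
    exact h1.symm.trans h2
  simp only [reindex_inner]
  have reindex_outer :
      (∑ σ ∈ Finset.range (g + 2), ∑ τ ∈ Finset.range (g + 2), F (σ + 1) τ)
        = ∑ σ ∈ Finset.range (g + 2), ∑ τ ∈ Finset.range (g + 2), F σ τ := by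
    set G : ℕ → R4 := fun σ => ∑ τ ∈ Finset.range (g + 2), F σ τ with hG
    have hG0 : G 0 = 0 := by
      rw [hG]; exact Finset.sum_eq_zero fun τ _ => hF0l τ
    have hGbig : G (g + 2) = 0 := by
      rw [hG]; exact Finset.sum_eq_zero fun τ _ => hFbig_l τ
    have h1 : (∑ σ ∈ Finset.range (g + 3), G σ)
        = (∑ σ ∈ Finset.range (g + 2), G (σ + 1)) + G 0 :=
      Finset.sum_range_succ' G (g + 2)
    have h2 : (∑ σ ∈ Finset.range (g + 3), G σ)
        = (∑ σ ∈ Finset.range (g + 2), G σ) + G (g + 2) :=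
      Finset.sum_range_succ G (g + 2)
    rw [hG0, add_zero] at h1
    rw [hGbig, add_zero] at h2
    exact h1.symm.trans h2
  rw [reindex_outer]
  -- Step 3: replace the P-side multiplier by `mm`
  refine Finset.sum_congr rfl fun σ _ => Finset.sum_congr rfl fun τ _ => ?_
  simp only [hF]
  by_cases h : g + 1 ≤ σ + τ
  · rw [if_pos h, if_pos h]
    by_cases hd : σ + τ = g + 1
    · rw [ee_diag hd, mul_zero, mul_zero]
    · rw [mm, if_neg (show ¬ σ + τ ≤ g by omega), if_neg hd]
  · rw [if_neg h, if_neg h]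

theorem stmt8 (g : ℕ) :
    - (X 0 * X 1 * X 2 * X 3 ^ 2) *
        Pval g (-(X 0 * X 2 * X 3)) (-(X 1 * X 2 * X 3)) +
      Qval g (-(X 0 * X 2 * X 3)) (-(X 1 * X 2 * X 3)) = PhiW g := by
  rw [Ppart, Qpart, PhiW_eq, ← Finset.sum_add_distrib]
  refine Finset.sum_congr rfl fun σ _ => ?_
  rw [← Finset.sum_add_distrib]
  refine Finset.sum_congr rfl fun τ _ => ?_
  by_cases h : σ + τ ≤ g
  · rw [if_neg (by omega), if_pos h, zero_add]
  · rw [if_pos (by omega), if_neg h, add_zero]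

end
end

section
/- For g ≥ 0, the polynomial Φ_g{(1 - x*y*z^2)*(1 - x*z)^g*(1 - y*z)^g}, where Φ_g(z^j) = u^j t^j for 0 ≤ j ≤ g and Φ_g(z^j) = u^{j-1} t^j for g+2 ≤ j ≤ 2g+2 (and Φ_g(z^{g+1}) = 0), has nonnegative coefficients after the substitution u ↦ -u; that is, Φ_g{(1-xyz^2)(1-xz)^g(1-yz)^g} evaluated at (x, y, -u, t) is a polynomial with nonnegative integer coefficients. -/
open MvPolynomial Polynomial

noncomputable section

/-- `Φ_g{(1 - xyz²)(1 - xz)^g (1 - yz)^g}` evaluated at `(x, y, -u, t)`: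
the `z^j` coefficient is multiplied by `(-u)^j t^j` for `0 ≤ j ≤ g`, by `0` for
`j = g+1`, and by `(-u)^{j-1} t^j` for `g+2 ≤ j ≤ 2g+2`. -/
def PhiWneg (g : ℕ) : R4 :=
  ∑ j ∈ Finset.range (2 * g + 3),
    (if j ≤ g then (-X 2) ^ j * X 3 ^ j
     else if j = g + 1 then 0
     else (-X 2) ^ (j - 1) * X 3 ^ j) * (Wpoly g).coeff j


open Nat in
lemma chooseIneq1 {g a b : ℕ} (h : a + 1 + (b + 1) ≤ g) :
    g.choose a * g.choose b ≤ g.choose (a+1) * g.choose (b+1) := by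
  have h1 := Nat.choose_succ_right_eq g a
  have h2 := Nat.choose_succ_right_eq g b
  have key : g.choose (a+1) * g.choose (b+1) * ((a+1)*(b+1))
      = g.choose a * g.choose b * ((g-a)*(g-b)) := by
    calc g.choose (a+1) * g.choose (b+1) * ((a+1)*(b+1))
        = (g.choose (a+1) * (a+1)) * (g.choose (b+1) * (b+1)) := by ring
      _ = (g.choose a * (g-a)) * (g.choose b * (g-b)) := by rw [h1, h2]
      _ = g.choose a * g.choose b * ((g-a)*(g-b)) := by ring
  have hab : (a+1)*(b+1) ≤ (g-a)*(g-b) := by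
    calc (a+1)*(b+1) ≤ (g-b)*(g-a) := Nat.mul_le_mul (by omega) (by omega)
      _ = (g-a)*(g-b) := Nat.mul_comm _ _
  have : g.choose a * g.choose b * ((a+1)*(b+1)) ≤ g.choose (a+1) * g.choose (b+1) * ((a+1)*(b+1)) := by
    calc g.choose a * g.choose b * ((a+1)*(b+1))
        ≤ g.choose a * g.choose b * ((g-a)*(g-b)) := Nat.mul_le_mul_left _ hab
      _ = g.choose (a+1) * g.choose (b+1) * ((a+1)*(b+1)) := key.symm
  exact Nat.le_of_mul_le_mul_right this (by positivity)

lemma chooseIneq2 {g a b : ℕ} (h : g ≤ a + b) :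
    g.choose (a+1) * g.choose (b+1) ≤ g.choose a * g.choose b := by
  have h1 := Nat.choose_succ_right_eq g a
  have h2 := Nat.choose_succ_right_eq g b
  have key : g.choose (a+1) * g.choose (b+1) * ((a+1)*(b+1))
      = g.choose a * g.choose b * ((g-a)*(g-b)) := by
    calc g.choose (a+1) * g.choose (b+1) * ((a+1)*(b+1))
        = (g.choose (a+1) * (a+1)) * (g.choose (b+1) * (b+1)) := by ring
      _ = (g.choose a * (g-a)) * (g.choose b * (g-b)) := by rw [h1, h2]
      _ = g.choose a * g.choose b * ((g-a)*(g-b)) := by ring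
  have hab : (g-a)*(g-b) ≤ (a+1)*(b+1) := by
    calc (g-a)*(g-b) ≤ (b+1)*(a+1) := Nat.mul_le_mul (by omega) (by omega)
      _ = (a+1)*(b+1) := Nat.mul_comm _ _
  have : g.choose (a+1) * g.choose (b+1) * ((a+1)*(b+1)) ≤ g.choose a * g.choose b * ((a+1)*(b+1)) := by
    calc g.choose (a+1) * g.choose (b+1) * ((a+1)*(b+1))
        = g.choose a * g.choose b * ((g-a)*(g-b)) := key
      _ ≤ g.choose a * g.choose b * ((a+1)*(b+1)) := Nat.mul_le_mul_left _ hab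
  exact Nat.le_of_mul_le_mul_right this (by positivity)

/-- The signed coefficient. -/
def Dcf (g a b : ℕ) : ℤ :=
  (g.choose a * g.choose b : ℕ) -
    (if a = 0 ∨ b = 0 then 0 else (g.choose (a-1) * g.choose (b-1) : ℕ))

lemma Dcf_nonneg {g a b : ℕ} (h : a + b ≤ g) : 0 ≤ Dcf g a b := by
  unfold Dcf
  by_cases h0 : a = 0 ∨ b = 0
  · rw [if_pos h0, Nat.cast_zero, sub_zero]; positivity
  · push_neg at h0
    obtain ⟨a, rfl⟩ : ∃ a', a = a' + 1 := ⟨a - 1, by omega⟩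
    obtain ⟨b, rfl⟩ : ∃ b', b = b' + 1 := ⟨b - 1, by omega⟩
    simp only [if_neg (by omega : ¬((a:ℕ)+1 = 0 ∨ (b:ℕ)+1 = 0)), Nat.add_sub_cancel, sub_nonneg]
    exact_mod_cast chooseIneq1 (by omega)

lemma Dcf_nonpos {g a b : ℕ} (h : g + 2 ≤ a + b) : Dcf g a b ≤ 0 := by
  unfold Dcf
  by_cases h0 : a = 0 ∨ b = 0
  · rw [if_pos h0]
    rcases h0 with h0 | h0 <;> subst h0
    · rw [Nat.choose_eq_zero_of_lt (show g < b by omega)]; simp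
    · rw [Nat.choose_eq_zero_of_lt (show g < a by omega)]; simp
  · push_neg at h0
    obtain ⟨a, rfl⟩ : ∃ a', a = a' + 1 := ⟨a - 1, by omega⟩
    obtain ⟨b, rfl⟩ : ∃ b', b = b' + 1 := ⟨b - 1, by omega⟩
    simp only [if_neg (by omega : ¬((a:ℕ)+1 = 0 ∨ (b:ℕ)+1 = 0)), Nat.add_sub_cancel, sub_nonpos]
    exact_mod_cast chooseIneq2 (by omega)



lemma coeff_one_sub_pow {S : Type*} [CommRing S] (a : S) (g p : ℕ) :
    ((1 - Polynomial.C a * Polynomial.X)^g).coeff p = (-a)^p * g.choose p := by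
  have h : (1 - Polynomial.C a * Polynomial.X : S[X]) = Polynomial.C (-a) * Polynomial.X + 1 := by
    rw [map_neg]; ring
  rw [h, add_pow, Polynomial.finset_sum_coeff]
  have hterm : ∀ k, ((Polynomial.C (-a) * Polynomial.X)^k * 1^(g-k) * (g.choose k : S[X])).coeff p
      = if p = k then (-a)^k * (g.choose k : S) else 0 := by
    intro k
    rw [one_pow, mul_one, mul_pow, ← Polynomial.C_pow, ← Polynomial.C_eq_natCast,
      mul_comm, ← mul_assoc, ← Polynomial.C_mul, Polynomial.coeff_C_mul, Polynomial.coeff_X_pow]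
    split <;> ring
  simp only [hterm]
  rw [Finset.sum_ite_eq]
  split
  · ring
  · rw [Nat.choose_eq_zero_of_lt (by simp at *; omega), Nat.cast_zero, mul_zero]

def ABpoly (g : ℕ) : Polynomial R4 :=
  (1 - Polynomial.C (X 0) * Polynomial.X) ^ g * (1 - Polynomial.C (X 1) * Polynomial.X) ^ g

lemma AB_coeff (g j : ℕ) : (ABpoly g).coeff j
    = ∑ p ∈ Finset.range (j+1),
        ((-X 0 : R4)^p * g.choose p) * ((-X 1 : R4)^(j-p) * g.choose (j-p)) := by
  rw [ABpoly, Polynomial.coeff_mul, Finset.Nat.sum_antidiagonal_eq_sum_range_succ_mk]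
  exact Finset.sum_congr rfl fun p _ => by rw [coeff_one_sub_pow, coeff_one_sub_pow]

lemma W_coeff_aux (g j : ℕ) : (Wpoly g).coeff j
    = (ABpoly g).coeff j
      - (if 2 ≤ j then (X 0 * X 1 : R4) * (ABpoly g).coeff (j-2) else 0) := by
  have hW : Wpoly g = (1 - Polynomial.C (X 0 * X 1) * Polynomial.X ^ 2) * ABpoly g := by
    rw [Wpoly, ABpoly, mul_assoc]
  have h2 : Polynomial.C (X 0 * X 1 : R4) * Polynomial.X ^ 2 * ABpoly g
      = (Polynomial.C (X 0 * X 1) * ABpoly g) * Polynomial.X ^ 2 := by ring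
  rw [hW, sub_mul, one_mul, Polynomial.coeff_sub, h2, Polynomial.coeff_mul_X_pow',
    Polynomial.coeff_C_mul]

lemma castC (m n : ℕ) : MvPolynomial.C ((m : ℤ) * (n : ℤ)) = ((m : R4) * (n : R4)) := by
  rw [map_mul, map_natCast, map_natCast]

lemma W_coeff (g j : ℕ) : (Wpoly g).coeff j
    = (-1)^j * ∑ p ∈ Finset.range (j+1),
        MvPolynomial.C (Dcf g p (j-p)) * X 0 ^ p * X 1 ^ (j-p) := by
  rw [W_coeff_aux, AB_coeff]
  simp only [Dcf, Nat.cast_mul, map_sub, sub_mul, Finset.sum_sub_distrib, mul_sub,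
    apply_ite (fun n : ℕ => MvPolynomial.C ((n : ℤ))), Nat.cast_zero, map_zero,
    Nat.cast_mul]
  congr 1
  · -- main term
    rw [Finset.mul_sum]
    refine Finset.sum_congr rfl fun p hp => ?_
    rw [Finset.mem_range] at hp
    have h1 : p + (j - p) = j := by omega
    rw [neg_pow (X 0 : R4), neg_pow (X 1 : R4), castC]
    calc (-1:R4)^p * X 0 ^ p * ↑(g.choose p) * ((-1:R4)^(j-p) * X 1 ^ (j-p) * ↑(g.choose (j-p)))
        = ((-1:R4)^p * (-1)^(j-p)) * (↑(g.choose p) * ↑(g.choose (j-p)) * X 0 ^ p * X 1 ^ (j-p)) := by ring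
      _ = (-1:R4)^j * (↑(g.choose p) * ↑(g.choose (j-p)) * X 0 ^ p * X 1 ^ (j-p)) := by
          rw [← pow_add, h1]
  · -- correction term
    match j with
    | 0 => simp
    | 1 =>
      rw [if_neg (by omega)]
      rw [Finset.sum_range_succ, Finset.sum_range_one]
      rw [if_pos (by omega : (0:ℕ) = 0 ∨ (1:ℕ)-0 = 0),
        if_pos (by omega : (1:ℕ) = 0 ∨ (1:ℕ)-1 = 0)]
      simp
    | (j+2) =>
      rw [if_pos (by omega)]
      rw [Finset.sum_range_succ]
      rw [if_pos (by omega : (j+2) = 0 ∨ (j+2)-(j+2) = 0)]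
      rw [zero_mul, zero_mul, add_zero]
      rw [Finset.sum_range_succ']
      rw [if_pos (by omega : (0:ℕ) = 0 ∨ (j+2)-0 = 0)]
      rw [zero_mul, zero_mul, add_zero]
      rw [show (j+2) - 2 = j by omega, AB_coeff, Finset.mul_sum, Finset.mul_sum]
      refine Finset.sum_congr rfl fun p hp => ?_
      rw [Finset.mem_range] at hp
      rw [if_neg (by omega : ¬(p+1 = 0 ∨ (j+2)-(p+1) = 0))]
      rw [show (p+1)-1 = p by omega, show ((j+2)-(p+1))-1 = j - p by omega,
        show (j+2)-(p+1) = (j-p)+1 by omega]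
      rw [neg_pow (X 0 : R4), neg_pow (X 1 : R4), castC]
      have h1 : p + (j - p) = j := by omega
      calc (X 0 * X 1 : R4) * ((-1:R4)^p * X 0 ^ p * ↑(g.choose p) * ((-1:R4)^(j-p) * X 1 ^ (j-p) * ↑(g.choose (j-p))))
          = ((-1:R4)^p * (-1)^(j-p)) * (↑(g.choose p) * ↑(g.choose (j-p)) * X 0 ^ (p+1) * X 1 ^ ((j-p)+1)) := by ring
        _ = (-1:R4)^j * (↑(g.choose p) * ↑(g.choose (j-p)) * X 0 ^ (p+1) * X 1 ^ ((j-p)+1)) := by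
            rw [← pow_add, h1]
        _ = (-1:R4)^(j+2) * (↑(g.choose p) * ↑(g.choose (j-p)) * X 0 ^ (p+1) * X 1 ^ ((j-p)+1)) := by
            rw [show ((-1:R4))^(j+2) = (-1)^j by rw [pow_add, neg_one_sq, mul_one]]

lemma mono4 (c : ℤ) (p q r s : ℕ) :
    (MvPolynomial.C c * X 0 ^ p * X 1 ^ q * X 2 ^ r * X 3 ^ s : R4)
      = MvPolynomial.monomial
          (Finsupp.single 0 p + Finsupp.single 1 q + Finsupp.single 2 r + Finsupp.single 3 s) c := by
  rw [MvPolynomial.X_pow_eq_monomial, MvPolynomial.X_pow_eq_monomial,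
    MvPolynomial.X_pow_eq_monomial, MvPolynomial.X_pow_eq_monomial, MvPolynomial.C_apply,
    MvPolynomial.monomial_mul, MvPolynomial.monomial_mul, MvPolynomial.monomial_mul,
    MvPolynomial.monomial_mul]
  simp

lemma PhiWneg_eq (g : ℕ) : PhiWneg g
    = ∑ j ∈ Finset.range (2*g+3), ∑ p ∈ Finset.range (j+1),
        MvPolynomial.monomial
          (Finsupp.single 0 p + Finsupp.single 1 (j-p)
            + Finsupp.single 2 (if j ≤ g then j else j-1) + Finsupp.single 3 j)
          (if j ≤ g then Dcf g p (j-p) else if j = g+1 then 0 else -Dcf g p (j-p)) := by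
  unfold PhiWneg
  refine Finset.sum_congr rfl fun j _ => ?_
  by_cases hj1 : j ≤ g
  · simp only [if_pos hj1]
    rw [W_coeff]
    have hneg : ((-1:R4))^j * (-1)^j = 1 := by
      rw [← pow_add, ← two_mul, pow_mul, neg_one_sq, one_pow]
    calc (-X 2 : R4)^j * X 3^j * ((-1)^j * ∑ p ∈ Finset.range (j+1),
            MvPolynomial.C (Dcf g p (j-p)) * X 0 ^ p * X 1 ^ (j-p))
        = ((-1:R4)^j * (-1)^j) * (X 2^j * X 3^j * ∑ p ∈ Finset.range (j+1),
            MvPolynomial.C (Dcf g p (j-p)) * X 0 ^ p * X 1 ^ (j-p)) := by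
          rw [neg_pow]; ring
      _ = X 2^j * X 3^j * ∑ p ∈ Finset.range (j+1),
            MvPolynomial.C (Dcf g p (j-p)) * X 0 ^ p * X 1 ^ (j-p) := by
          rw [hneg, one_mul]
      _ = _ := by
          rw [Finset.mul_sum]
          refine Finset.sum_congr rfl fun p _ => ?_
          rw [← mono4]; ring
  · by_cases hj2 : j = g + 1
    · simp [if_neg hj1, if_pos hj2, hj1]
    · simp only [if_neg hj1, if_neg hj2]
      rw [W_coeff]
      obtain ⟨k, rfl⟩ : ∃ k, j = k + 1 := ⟨j-1, by omega⟩
      have hk1 : k + 1 - 1 = k := by omega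
      have hneg : ((-1:R4))^k * (-1)^(k+1) = -1 := by
        rw [pow_succ, ← mul_assoc, ← pow_add, ← two_mul, pow_mul, neg_one_sq, one_pow, one_mul]
      rw [hk1]
      calc (-X 2 : R4)^k * X 3^(k+1) * ((-1)^(k+1) * ∑ p ∈ Finset.range (k+1+1),
              MvPolynomial.C (Dcf g p (k+1-p)) * X 0 ^ p * X 1 ^ (k+1-p))
          = ((-1:R4)^k * (-1)^(k+1)) * (X 2^k * X 3^(k+1) * ∑ p ∈ Finset.range (k+1+1),
              MvPolynomial.C (Dcf g p (k+1-p)) * X 0 ^ p * X 1 ^ (k+1-p)) := by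
            rw [neg_pow]; ring
        _ = -(X 2^k * X 3^(k+1) * ∑ p ∈ Finset.range (k+1+1),
              MvPolynomial.C (Dcf g p (k+1-p)) * X 0 ^ p * X 1 ^ (k+1-p)) := by
            rw [hneg]; ring
        _ = _ := by
            rw [Finset.mul_sum, ← Finset.sum_neg_distrib]
            refine Finset.sum_congr rfl fun p _ => ?_
            rw [← mono4, map_neg]; ring

theorem stmt9 (g : ℕ) : ∀ m : Fin 4 →₀ ℕ, 0 ≤ (PhiWneg g).coeff m := by
  intro m
  rw [PhiWneg_eq]
  rw [MvPolynomial.coeff_sum]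
  refine Finset.sum_nonneg fun j hj => ?_
  rw [MvPolynomial.coeff_sum]
  refine Finset.sum_nonneg fun p hp => ?_
  rw [Finset.mem_range] at hp
  by_cases hj1 : j ≤ g
  · simp only [if_pos hj1, MvPolynomial.coeff_monomial]
    split
    · exact Dcf_nonneg (by omega)
    · exact le_refl (0:ℤ)
  · by_cases hj2 : j = g + 1
    · simp only [if_neg hj1, if_pos hj2, MvPolynomial.coeff_monomial]
      split <;> simp
    · simp only [if_neg hj1, if_neg hj2, MvPolynomial.coeff_monomial]
      split
      · exact neg_nonneg.mpr (Dcf_nonpos (by omega))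
      · exact le_refl (0:ℤ)

end
end

section
/- In the Orlik–Solomon algebra of the braid arrangement on [n], any product of generators g_{i_1 j_1} ··· g_{i_k j_k} is a ℚ-linear combination of monomials of the form g_{J_1} ··· g_{J_h}, where J_1, ..., J_h are pairwise disjoint tuples of distinct elements of [n], each of length at least 2, and g_J for J = (j_1, ..., j_m) denotes g_{j_1 j_2} g_{j_2 j_3} ··· g_{j_{m-1} j_m} (i.e., every monomial reduces to a product of 'chains' on disjoint index sets). -/
/-- The chain monomial `g_J = g_{j_1 j_2} g_{j_2 j_3} ⋯ g_{j_{m-1} j_m}` associated to a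
list `J = [j_1, …, j_m]`. -/
def chainProd {A : Type*} [Ring A] {n : ℕ} (g : Fin n → Fin n → A)
    (J : List (Fin n)) : A :=
  ((J.zip J.tail).map (fun p => g p.1 p.2)).prod

/-!
A monomial in the generators is the product over the edge list of a graph on `[n]`, and by
anticommutation it depends on that list only up to sign. It therefore suffices to show that the
span of products of chains over partitions of `[n]` into paths is stable under left
multiplication by a generator `g i j`. If `i` and `j` lie on one path, the new edge closes a cycle
and the product vanishes. Otherwise the two paths and the edge form a tree, and Arnold's relation
`g x z * g z b = g x z * g x b + g x b * g z b` slides a pendant edge along a path until the tree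
is written as a combination of paths.
-/

namespace OrlikSolomon

open List

section Sign

variable {R : Type*} [Ring R]

def EqUpToSign (x y : R) : Prop := x = y ∨ x = -y

namespace EqUpToSign

theorem refl (x : R) : EqUpToSign x x := Or.inl rfl

theorem of_eq {x y : R} (h : x = y) : EqUpToSign x y := Or.inl h

theorem symm {x y : R} : EqUpToSign x y → EqUpToSign y x := by
  rintro (rfl | rfl) <;> simp [EqUpToSign]

theorem trans {x y z : R} : EqUpToSign x y → EqUpToSign y z → EqUpToSign x z := by
  rintro (rfl | rfl) (rfl | rfl) <;> simp [EqUpToSign]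

theorem mul_left (c : R) {x y : R} : EqUpToSign x y → EqUpToSign (c * x) (c * y) := by
  rintro (rfl | rfl) <;> simp [EqUpToSign]

theorem mul_right (c : R) {x y : R} : EqUpToSign x y → EqUpToSign (x * c) (y * c) := by
  rintro (rfl | rfl) <;> simp [EqUpToSign]

theorem mem_iff {S : Type*} [SetLike S R] [NegMemClass S R] {p : S} {x y : R}
    (h : EqUpToSign x y) : x ∈ p ↔ y ∈ p := by
  rcases h with rfl | rfl <;> simp

end EqUpToSign

end Sign

section Chains

variable {A : Type*} [Ring A] {n : ℕ} {g : Fin n → Fin n → A}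

def edgeProd (g : Fin n → Fin n → A) (l : List (Fin n × Fin n)) : A :=
  (l.map fun p => g p.1 p.2).prod

@[simp]
theorem edgeProd_nil : edgeProd g [] = 1 := rfl

@[simp]
theorem edgeProd_cons (p : Fin n × Fin n) (l : List (Fin n × Fin n)) :
    edgeProd g (p :: l) = g p.1 p.2 * edgeProd g l := by
  simp [edgeProd]

@[simp]
theorem edgeProd_append (l l' : List (Fin n × Fin n)) :
    edgeProd g (l ++ l') = edgeProd g l * edgeProd g l' := by
  simp [edgeProd]

theorem chainProd_eq_edgeProd (J : List (Fin n)) :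
    chainProd g J = edgeProd g (J.zip J.tail) := rfl

theorem edgeProd_perm (hanti : ∀ i j k l, g i j * g k l = -(g k l * g i j))
    {l l' : List (Fin n × Fin n)} (h : l ~ l') : EqUpToSign (edgeProd g l) (edgeProd g l') := by
  induction h with
  | nil => exact .refl _
  | cons p _ ih => simpa only [edgeProd_cons] using ih.mul_left _
  | swap p q l =>
    right
    simp only [edgeProd_cons, ← mul_assoc, hanti q.1 q.2 p.1 p.2, neg_mul]
  | trans _ _ ih₁ ih₂ => exact ih₁.trans ih₂

@[simp]
theorem chainProd_singleton (a : Fin n) : chainProd g [a] = 1 := rfl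

theorem chainProd_cons_cons (a b : Fin n) (T : List (Fin n)) :
    chainProd g (a :: b :: T) = g a b * chainProd g (b :: T) := by
  simp [chainProd]

theorem chainProd_append_cons (U : List (Fin n)) (v : Fin n) (V : List (Fin n)) :
    chainProd g (U ++ v :: V) = chainProd g (U ++ [v]) * chainProd g (v :: V) := by
  induction U with
  | nil => simp
  | cons a U ih =>
    cases U with
    | nil => simp [chainProd_cons_cons]
    | cons b U => simp only [cons_append, chainProd_cons_cons] at ih ⊢; rw [ih, mul_assoc]

theorem chainProd_append_pair (U : List (Fin n)) (a b : Fin n) :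
    chainProd g (U ++ [a, b]) = chainProd g (U ++ [a]) * g a b := by
  rw [chainProd_append_cons, chainProd_cons_cons, chainProd_singleton, mul_one]

theorem mul_chainProd_comm (hanti : ∀ i j k l, g i j * g k l = -(g k l * g i j))
    (x y : Fin n) (J : List (Fin n)) :
    EqUpToSign (g x y * chainProd g J) (chainProd g J * g x y) := by
  simpa [chainProd_eq_edgeProd] using
    edgeProd_perm hanti (perm_append_singleton (x, y) (J.zip J.tail)).symm

theorem chainProd_reverse (hsymm : ∀ i j, g i j = g j i)
    (hanti : ∀ i j k l, g i j * g k l = -(g k l * g i j)) :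
    ∀ J : List (Fin n), EqUpToSign (chainProd g J.reverse) (chainProd g J)
  | [] => .refl _
  | [_] => .refl _
  | a :: b :: T => by
    have hrev : (a :: b :: T).reverse = T.reverse ++ [b, a] := by simp
    have hrev' : T.reverse ++ [b] = (b :: T).reverse := by simp
    rw [hrev, chainProd_append_pair, hrev', hsymm b a, chainProd_cons_cons]
    exact ((chainProd_reverse hsymm hanti (b :: T)).mul_right _).trans
      (mul_chainProd_comm hanti a b _).symm

theorem prod_map_chainProd_eq_edgeProd (L : List (List (Fin n))) :
    (L.map (chainProd g)).prod = edgeProd g (L.flatMap fun J => J.zip J.tail) := by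
  induction L with
  | nil => rfl
  | cons J L ih => simp [ih, chainProd_eq_edgeProd]

theorem prod_map_chainProd_perm (hanti : ∀ i j k l, g i j * g k l = -(g k l * g i j))
    {L L' : List (List (Fin n))} (h : L ~ L') :
    EqUpToSign (L.map (chainProd g)).prod (L'.map (chainProd g)).prod := by
  rw [prod_map_chainProd_eq_edgeProd, prod_map_chainProd_eq_edgeProd]
  exact edgeProd_perm hanti (h.flatMap_right _)

theorem chainProd_of_length_lt_two {J : List (Fin n)} (h : J.length < 2) :
    chainProd g J = 1 := by
  match J, h with
  | [], _ => rfl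
  | [_], _ => rfl

theorem prod_map_chainProd_filter (L : List (List (Fin n))) :
    ((L.filter fun J => 2 ≤ J.length).map (chainProd g)).prod = (L.map (chainProd g)).prod := by
  induction L with
  | nil => rfl
  | cons J L ih =>
    by_cases hJ : 2 ≤ J.length
    · simp [hJ, ih]
    · simp [hJ, ih, chainProd_of_length_lt_two (not_le.1 hJ)]

end Chains

section Relations

variable {A : Type*} [Ring A] {n : ℕ}

structure BraidRelations (g : Fin n → Fin n → A) : Prop where
  symm : ∀ i j, g i j = g j i
  sq : ∀ i j, g i j * g i j = 0
  anti : ∀ i j k l, g i j * g k l = -(g k l * g i j)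
  arnold : ∀ i j k, i ≠ j → j ≠ k → i ≠ k →
    g i j * g j k + g j k * g k i + g k i * g i j = 0

variable {g : Fin n → Fin n → A}

theorem BraidRelations.mul_eq_add {i j k : Fin n} (hg : BraidRelations g)
    (hij : i ≠ j) (hjk : j ≠ k) (hik : i ≠ k) :
    g i j * g j k = g i j * g i k + g i k * g j k := by
  have h := hg.arnold i j k hij hjk hik
  rw [hg.anti j k k i, hg.anti k i i j, hg.symm k i] at h
  rw [← sub_eq_zero, ← h]
  abel

/-- Arnold's relation at the first vertex of the path shortens the cycle closed by the chord. -/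
theorem mul_chainProd_eq_zero (hg : BraidRelations g) :
    ∀ {J : List (Fin n)}, J.Nodup → ∀ {i j : Fin n}, i ∈ J → j ∈ J → i ≠ j →
      g i j * chainProd g J = 0
  | [], _, _, _, hi, _, _ => absurd hi (not_mem_nil)
  | [_], _, _, _, hi, hj, hij => by simp_all
  | a :: w :: T, hnd, i, j, hi, hj, hij => by
    have ih : ∀ {i j : Fin n}, i ∈ w :: T → j ∈ w :: T → i ≠ j →
        g i j * chainProd g (w :: T) = 0 :=
      mul_chainProd_eq_zero hg hnd.of_cons
    have haw : a ≠ w := fun h => (nodup_cons.1 hnd).1 (h ▸ mem_cons_self)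
    have hhead : ∀ j ∈ w :: T, j ≠ a → g a j * chainProd g (a :: w :: T) = 0 := by
      intro j hj hja
      rw [chainProd_cons_cons, ← mul_assoc]
      by_cases hjw : j = w
      · rw [hjw, hg.sq, zero_mul]
      · rw [hg.symm a j, hg.mul_eq_add hja haw hjw, add_mul, mul_assoc, ih hj mem_cons_self hjw,
          hg.anti j w a w, neg_mul, mul_assoc, ih hj mem_cons_self hjw]
        simp
    rcases mem_cons.1 hi with rfl | hi'
    · exact hhead j ((mem_cons.1 hj).resolve_left (Ne.symm hij)) (Ne.symm hij)
    rcases mem_cons.1 hj with rfl | hj'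
    · rw [hg.symm]; exact hhead i hi' hij
    rw [chainProd_cons_cons, ← mul_assoc, hg.anti, neg_mul, mul_assoc, ih hi' hj' hij]
    simp

end Relations

section Spans

variable {R A : Type*} [CommSemiring R] [Semiring A] [Algebra R A]

theorem mul_mem_of_mem_span {s : Set A} {p : Submodule R A} {a : A}
    (ha : a ∈ Submodule.span R s) {b : A} (h : ∀ x ∈ s, x * b ∈ p) : a * b ∈ p :=
  (Submodule.span_le (p := p.comap (LinearMap.mulRight R b))).2 h ha

theorem mul_mem_of_mem_span_left {s : Set A} {p : Submodule R A} {a : A}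
    (ha : a ∈ Submodule.span R s) {b : A} (h : ∀ x ∈ s, b * x ∈ p) : b * a ∈ p :=
  (Submodule.span_le (p := p.comap (LinearMap.mulLeft R b))).2 h ha

end Spans

section Paths

variable {A : Type*} [Ring A] [Algebra ℚ A] {n : ℕ} {g : Fin n → Fin n → A}

def pathSpan (g : Fin n → Fin n → A) (M : List (Fin n)) : Submodule ℚ A :=
  Submodule.span ℚ (chainProd g '' {K | K ~ M})

theorem chainProd_mem_pathSpan {K M : List (Fin n)} (h : K ~ M) :
    chainProd g K ∈ pathSpan g M :=
  Submodule.subset_span ⟨K, h, rfl⟩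

theorem pathSpan_congr {M M' : List (Fin n)} (h : M ~ M') : pathSpan g M = pathSpan g M' := by
  unfold pathSpan
  congr 2
  ext K
  exact ⟨fun hK => hK.trans h, fun hK => hK.trans h.symm⟩

theorem mul_mem_of_mem_pathSpan {M : List (Fin n)} {a : A} (ha : a ∈ pathSpan g M) {b : A}
    {p : Submodule ℚ A} (h : ∀ K, K ~ M → chainProd g K * b ∈ p) : a * b ∈ p :=
  mul_mem_of_mem_span ha (by rintro _ ⟨K, hK, rfl⟩; exact h K hK)

/-- Arnold's relation replaces the pendant edge `x z` at a path `⋯ z b ⋯` by the detour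
`z x b` or by the pendant edge `x b`, one step further along the path. -/
theorem mul_chainProd_mem_pathSpan (hg : BraidRelations g) {x z : Fin n} {J : List (Fin n)}
    (hx : x ∉ J) (hJ : J.Nodup) (hz : z ∈ J) :
    g x z * chainProd g J ∈ pathSpan g (x :: J) := by
  obtain ⟨U, V, rfl⟩ := append_of_mem hz
  clear hz
  induction V generalizing U z with
  | nil =>
    have h : EqUpToSign (g x z * chainProd g (U ++ [z])) (chainProd g (U ++ [z, x])) := by
      rw [chainProd_append_pair, hg.symm z x]
      exact mul_chainProd_comm hg.anti x z _
    exact h.mem_iff.2 (chainProd_mem_pathSpan (by grind))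
  | cons b V ih =>
    have hxz : x ≠ z := by grind
    have hxb : x ≠ b := by grind
    have hzb : z ≠ b := by grind
    set C := chainProd g (U ++ [z])
    have hsplit : chainProd g (U ++ z :: b :: V) = C * (g z b * chainProd g (b :: V)) := by
      rw [chainProd_append_cons, chainProd_cons_cons]
    have hdetour : C * (g x z * (g x b * chainProd g (b :: V)))
        ∈ pathSpan g (x :: (U ++ z :: b :: V)) := by
      rw [hg.symm x z, ← chainProd_cons_cons, ← chainProd_cons_cons, ← chainProd_append_cons]
      exact chainProd_mem_pathSpan (by grind)
    have hpendant : C * (g x b * (g z b * chainProd g (b :: V)))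
        ∈ pathSpan g (x :: (U ++ z :: b :: V)) := by
      have h := ih (U := U ++ [z]) (z := b) (by simpa using hx) (by simpa using hJ)
      simp only [append_assoc, singleton_append] at h
      rw [hsplit, ← mul_assoc] at h
      rw [← mul_assoc]
      exact (((mul_chainProd_comm hg.anti x b _).mul_right _).mem_iff).1 h
    have h : EqUpToSign (g x z * chainProd g (U ++ z :: b :: V))
        (C * (g x z * (g x b * chainProd g (b :: V)))
          + C * (g x b * (g z b * chainProd g (b :: V)))) := by
      rw [hsplit, ← mul_assoc]
      refine ((mul_chainProd_comm hg.anti x z _).mul_right _).trans (.of_eq ?_)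
      rw [mul_assoc, ← mul_assoc (g x z), hg.mul_eq_add hxz hzb hxb]
      noncomm_ring
    exact h.mem_iff.2 (add_mem hdetour hpendant)

theorem chainProd_mul_chainProd_cons_mem_pathSpan (hg : BraidRelations g) {y : Fin n} :
    ∀ {T K : List (Fin n)}, y ∈ K → (K ++ T).Nodup →
      chainProd g K * chainProd g (y :: T) ∈ pathSpan g (K ++ T)
  | [], K, _, _ => by simpa using chainProd_mem_pathSpan (g := g) (Perm.refl K)
  | t :: T, K, hy, hnd => by
    have htK : t ∉ K := by grind
    have h : EqUpToSign (chainProd g K * chainProd g (y :: t :: T))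
        (g t y * chainProd g K * chainProd g (t :: T)) := by
      rw [chainProd_cons_cons, ← mul_assoc, hg.symm t y]
      exact (mul_chainProd_comm hg.anti y t K).symm.mul_right _
    refine h.mem_iff.2 (mul_mem_of_mem_pathSpan
      (mul_chainProd_mem_pathSpan hg htK (hnd.sublist (sublist_append_left _ _)) hy)
      fun K' hK' => ?_)
    rw [pathSpan_congr (show K ++ t :: T ~ K' ++ T by grind)]
    exact chainProd_mul_chainProd_cons_mem_pathSpan hg (hK'.mem_iff.2 mem_cons_self)
      ((show K' ++ T ~ K ++ t :: T by grind).nodup_iff.2 hnd)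

/-- Reversing `S ++ [y]` turns the second path into two paths starting at `y`. -/
theorem chainProd_mul_chainProd_mem_pathSpan (hg : BraidRelations g) {y : Fin n}
    {K S T : List (Fin n)} (hy : y ∈ K) (hnd : (K ++ S ++ T).Nodup) :
    chainProd g K * chainProd g (S ++ y :: T) ∈ pathSpan g (K ++ S ++ T) := by
  have h : EqUpToSign (chainProd g K * chainProd g (S ++ y :: T))
      (chainProd g K * chainProd g (y :: S.reverse) * chainProd g (y :: T)) := by
    rw [chainProd_append_cons, ← mul_assoc]
    refine .mul_right _ (.mul_left _ ?_)
    simpa using (chainProd_reverse hg.symm hg.anti (g := g) (y :: S.reverse))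
  refine h.mem_iff.2 (mul_mem_of_mem_pathSpan
    (chainProd_mul_chainProd_cons_mem_pathSpan hg hy (by grind)) fun K' hK' => ?_)
  rw [pathSpan_congr (show K ++ S ++ T ~ K' ++ T by grind)]
  exact chainProd_mul_chainProd_cons_mem_pathSpan hg
    (hK'.mem_iff.2 (mem_append_left _ hy)) ((show K' ++ T ~ K ++ S ++ T by grind).nodup_iff.2 hnd)

theorem mul_chainProd_mul_chainProd_mem_pathSpan (hg : BraidRelations g) {x y : Fin n}
    {J J' : List (Fin n)} (hx : x ∈ J) (hy : y ∈ J') (hnd : (J ++ J').Nodup) :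
    g x y * (chainProd g J * chainProd g J') ∈ pathSpan g (J ++ J') := by
  obtain ⟨S, T, rfl⟩ := append_of_mem hy
  rw [← mul_assoc, hg.symm]
  refine mul_mem_of_mem_pathSpan (mul_chainProd_mem_pathSpan hg (by grind)
    (hnd.sublist (sublist_append_left _ _)) hx) fun K hK => ?_
  rw [pathSpan_congr (show J ++ (S ++ y :: T) ~ K ++ S ++ T by grind)]
  exact chainProd_mul_chainProd_mem_pathSpan hg (hK.mem_iff.2 mem_cons_self)
    ((show K ++ S ++ T ~ J ++ (S ++ y :: T) by grind).nodup_iff.2 hnd)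

/-- Isolated vertices are paths of length `1`, whose chain monomial is `1`. -/
def pathPartitionSpan (g : Fin n → Fin n → A) : Submodule ℚ A :=
  Submodule.span ℚ
    ((fun L : List (List (Fin n)) => (L.map (chainProd g)).prod) '' {L | L.flatten ~ finRange n})

theorem prod_mem_pathPartitionSpan {L : List (List (Fin n))} (hL : L.flatten ~ finRange n) :
    (L.map (chainProd g)).prod ∈ pathPartitionSpan g :=
  Submodule.subset_span ⟨L, hL, rfl⟩

theorem one_mem_pathPartitionSpan : (1 : A) ∈ pathPartitionSpan g := by
  simpa [Function.comp_def] using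
    prod_mem_pathPartitionSpan (g := g) (L := (finRange n).map fun i => [i])
      (by rw [← flatMap_def, flatMap_singleton'])

theorem mul_prod_mem_pathPartitionSpan (hg : BraidRelations g) {L : List (List (Fin n))}
    (hL : L.flatten ~ finRange n) {i j : Fin n} (hij : i ≠ j) :
    g i j * (L.map (chainProd g)).prod ∈ pathPartitionSpan g := by
  have hnd : L.flatten.Nodup := hL.nodup_iff.2 (nodup_finRange n)
  obtain ⟨J, hJL, hiJ⟩ := mem_flatten.1 (hL.mem_iff.2 (mem_finRange i))
  have hL₁ : L ~ J :: L.erase J := perm_cons_erase hJL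
  by_cases hjJ : j ∈ J
  · refine ((prod_map_chainProd_perm hg.anti hL₁).mul_left _).mem_iff.2 ?_
    have hJ : J.Nodup := (hL₁.flatten.nodup_iff.1 hnd).sublist (by simp)
    rw [map_cons, prod_cons, ← mul_assoc, mul_chainProd_eq_zero hg hJ hiJ hjJ hij, zero_mul]
    exact zero_mem _
  obtain ⟨J', hJ'L, hjJ'⟩ : ∃ J' ∈ L.erase J, j ∈ J' := by
    have := hL₁.flatten.mem_iff.1 (hL.mem_iff.2 (mem_finRange j))
    simp_all [mem_flatten]
  have hL₂ : L ~ J :: J' :: (L.erase J).erase J' := hL₁.trans (.cons _ (perm_cons_erase hJ'L))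
  have hflat : L.flatten ~ (J ++ J') ++ ((L.erase J).erase J').flatten := by
    simpa using hL₂.flatten
  refine ((prod_map_chainProd_perm hg.anti hL₂).mul_left _).mem_iff.2 ?_
  rw [map_cons, map_cons, prod_cons, prod_cons, ← mul_assoc (chainProd g J), ← mul_assoc]
  refine mul_mem_of_mem_pathSpan (mul_chainProd_mul_chainProd_mem_pathSpan hg hiJ hjJ'
    ((hflat.nodup_iff.1 hnd).sublist (sublist_append_left _ _))) fun K hK => ?_
  exact prod_mem_pathPartitionSpan (L := K :: _)
    ((hK.append_right _).trans (hflat.symm.trans hL))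

theorem mul_mem_pathPartitionSpan (hg : BraidRelations g) {a : A} (ha : a ∈ pathPartitionSpan g)
    {i j : Fin n} (hij : i ≠ j) : g i j * a ∈ pathPartitionSpan g := by
  refine mul_mem_of_mem_span_left ha ?_
  rintro _ ⟨L, hL, rfl⟩
  exact mul_prod_mem_pathPartitionSpan hg hL hij

theorem pathPartitionSpan_le :
    pathPartitionSpan g ≤ Submodule.span ℚ {a : A | ∃ L : List (List (Fin n)),
      L.flatten.Nodup ∧ (∀ J ∈ L, 2 ≤ J.length) ∧ a = (L.map (chainProd g)).prod} := by
  refine Submodule.span_le.2 ?_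
  rintro _ ⟨L, hL, rfl⟩
  refine Submodule.subset_span ⟨L.filter fun J => 2 ≤ J.length, ?_, ?_,
    (prod_map_chainProd_filter L).symm⟩
  · exact (hL.nodup_iff.2 (nodup_finRange n)).sublist (filter_sublist (l := L)).flatten
  · intro J hJ
    simpa using (mem_filter.1 hJ).2

end Paths

end OrlikSolomon

/-- In any ℚ-algebra containing elements `g i j` behaving like the degree-1 generators of
the Orlik–Solomon algebra of the braid arrangement on `[n]`, any product of generators
`g_{i_1 j_1} ⋯ g_{i_k j_k}` lies in the ℚ-span of products `g_{J_1} ⋯ g_{J_h}` of chains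
on pairwise disjoint tuples of distinct indices, each of length at least 2. -/
theorem stmt13 {A : Type*} [Ring A] [Algebra ℚ A] {n : ℕ} (g : Fin n → Fin n → A)
    (hsymm : ∀ i j, g i j = g j i)
    (hsq : ∀ i j, g i j * g i j = 0)
    (hanti : ∀ i j k l, g i j * g k l = -(g k l * g i j))
    (harnold : ∀ i j k, i ≠ j → j ≠ k → i ≠ k →
      g i j * g j k + g j k * g k i + g k i * g i j = 0)
    (P : List (Fin n × Fin n)) (hP : ∀ p ∈ P, p.1 ≠ p.2) :
    (P.map (fun p => g p.1 p.2)).prod ∈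
      Submodule.span ℚ {a : A | ∃ L : List (List (Fin n)),
        L.flatten.Nodup ∧ (∀ J ∈ L, 2 ≤ J.length) ∧
        a = (L.map (chainProd g)).prod} := by
  have hg : OrlikSolomon.BraidRelations g := ⟨hsymm, hsq, hanti, harnold⟩
  refine OrlikSolomon.pathPartitionSpan_le ?_
  induction P with
  | nil => exact OrlikSolomon.one_mem_pathPartitionSpan
  | cons p P ih =>
    rw [List.map_cons, List.prod_cons]
    exact OrlikSolomon.mul_mem_pathPartitionSpan hg
      (ih fun q hq => hP q (List.mem_cons_of_mem _ hq)) (hP p List.mem_cons_self)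
end
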